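/- arXiv:1002.2094 — 2 statements merged into one kernel-verified Lean document; each statement's English description precedes it below -/
import Mathlib

section
/- For p > 2 and K ∈ ℝ, the function f(z) = ((p-2)/(p-1))^((p-1)/(p-2)) (K-z)₊^((p-1)/(p-2)) satisfies, for all z < K, the traveling-wave ODE with speed c = 1: -f'(z) - (|f'|^(p-2) f')'(z) + |f'(z)|^(p-1) - f(z) = 0. -/
/-!
On `z < K` the profile is `f = C (K - z)^α` with `α = (p-1)/(p-2)` and `C = ((p-2)/(p-1))^α`.
Since `(α - 1)(p - 1) = α` and `(C α)^(p-1) = C`, it solves `|f'|^(p-1) = f` there; as `f' < 0`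
the flux is `|f'|^(p-2) f' = -|f'|^(p-1) = -f`, whose derivative is `-f'`. Both pairs of terms of
the equation then cancel.
-/

open Real Filter Topology

noncomputable section

namespace TravelingWave

def exponent (p : ℝ) : ℝ := (p - 1) / (p - 2)

def coeff (p : ℝ) : ℝ := ((p - 2) / (p - 1)) ^ exponent p

def profile (p K z : ℝ) : ℝ := coeff p * (max (K - z) 0) ^ exponent p

variable {p K z : ℝ}

lemma exponent_sub_one_mul (hp : 2 < p) : (exponent p - 1) * (p - 1) = exponent p := by
  have : p - 2 ≠ 0 := by linarith
  unfold exponent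
  field_simp
  ring

lemma coeff_pos (hp : 2 < p) : 0 < coeff p :=
  rpow_pos_of_pos (div_pos (by linarith) (by linarith)) _

lemma exponent_pos (hp : 2 < p) : 0 < exponent p :=
  div_pos (by linarith) (by linarith)

lemma coeff_mul_exponent_rpow (hp : 2 < p) : (coeff p * exponent p) ^ (p - 1) = coeff p := by
  have hr : 0 < (p - 2) / (p - 1) := div_pos (by linarith) (by linarith)
  -- `exponent p` is the reciprocal of the base of `coeff p`
  have h : coeff p * exponent p = ((p - 2) / (p - 1)) ^ (exponent p - 1) := by
    rw [rpow_sub_one hr.ne', coeff, exponent, div_eq_mul_inv _ ((p - 2) / (p - 1)), inv_div]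
  rw [h, ← rpow_mul hr.le, exponent_sub_one_mul hp, coeff]

lemma profile_eventuallyEq (hz : z < K) :
    profile p K =ᶠ[𝓝 z] fun s => coeff p * (K - s) ^ exponent p := by
  filter_upwards [Iio_mem_nhds hz] with s hs
  rw [profile, max_eq_left (sub_nonneg.2 (le_of_lt hs))]

lemma hasDerivAt_profile (hz : z < K) :
    HasDerivAt (profile p K) (-(coeff p * exponent p * (K - z) ^ (exponent p - 1))) z := by
  have h := (((hasDerivAt_id z).const_sub K).rpow_const (p := exponent p)
    (Or.inl (sub_pos.2 hz).ne')).const_mul (coeff p)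
  refine (h.congr_of_eventuallyEq (profile_eventuallyEq hz)).congr_deriv ?_
  simp only [id]
  ring

lemma deriv_profile_neg (hp : 2 < p) (hz : z < K) : deriv (profile p K) z < 0 := by
  have := rpow_pos_of_pos (sub_pos.2 hz) (exponent p - 1)
  have := coeff_pos hp
  have := exponent_pos hp
  rw [(hasDerivAt_profile hz).deriv, neg_lt_zero]
  positivity

lemma abs_deriv_profile_rpow (hp : 2 < p) (hz : z < K) :
    |deriv (profile p K) z| ^ (p - 1) = profile p K z := by
  have hKz : 0 < K - z := sub_pos.2 hz
  have := coeff_pos hp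
  have := exponent_pos hp
  rw [(hasDerivAt_profile hz).deriv, abs_neg, abs_of_nonneg (by positivity),
    mul_rpow (by positivity) (by positivity), coeff_mul_exponent_rpow hp, ← rpow_mul hKz.le,
    exponent_sub_one_mul hp, (profile_eventuallyEq hz).eq_of_nhds]

lemma abs_rpow_sub_two_mul_of_neg {x : ℝ} (hx : x < 0) (p : ℝ) :
    |x| ^ (p - 2) * x = -|x| ^ (p - 1) := by
  have hx' : |x| ≠ 0 := abs_ne_zero.2 hx.ne
  rw [show p - 2 = (p - 1) - 1 by ring, rpow_sub_one hx', abs_of_neg hx]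
  field_simp [hx.ne]

lemma flux_profile_eventuallyEq (hp : 2 < p) (hz : z < K) :
    (fun s => |deriv (profile p K) s| ^ (p - 2) * deriv (profile p K) s)
      =ᶠ[𝓝 z] fun s => -profile p K s := by
  filter_upwards [Iio_mem_nhds hz] with s hs
  rw [abs_rpow_sub_two_mul_of_neg (deriv_profile_neg hp hs), abs_deriv_profile_rpow hp hs]

end TravelingWave

open TravelingWave

/-- For `p > 2` and `K ∈ ℝ`, the explicit profile
`f(z) = ((p-2)/(p-1))^((p-1)/(p-2)) (K-z)₊^((p-1)/(p-2))` satisfies, for all `z < K`,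
the traveling-wave ODE with speed `c = 1`:
`-f' - (|f'|^(p-2) f')' + |f'|^(p-1) - f = 0`. -/
theorem stmt2 (p K : ℝ) (hp : 2 < p)
    (f : ℝ → ℝ)
    (hf : ∀ z, f z = ((p - 2) / (p - 1)) ^ ((p - 1) / (p - 2)) *
      (max (K - z) 0) ^ ((p - 1) / (p - 2)))
    (z : ℝ) (hz : z < K) :
    -deriv f z - deriv (fun s => |deriv f s| ^ (p - 2) * deriv f s) z
      + |deriv f z| ^ (p - 1) - f z = 0 := by
  obtain rfl : f = profile p K := funext hf
  rw [(flux_profile_eventuallyEq hp hz).deriv_eq, deriv.fun_neg, abs_deriv_profile_rpow hp hz]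
  ring
end
end

section
/- For p > 2, R > 0, and the function F_R(τ,y) = ((p-2)/(p-1))^((p-1)/(p-2)) ((τ+R)/(τ+1) - |y|)₊^((p-1)/(p-2)) on (0,∞)×ℝ (so N = 1): at every point (τ,y) with y ≠ 0 and 0 < (τ+R)/(τ+1) - |y|, F_R satisfies ∂_τ F_R - (1/(1+τ))(Δ_p F_R + y ∂_y F_R - ((p-1)/(p-2)) F_R) + |∂_y F_R|^(p-1) - F_R = 0, where Δ_p F = ∂_y(|∂_y F|^(p-2) ∂_y F). -/
/-!
Where `g = (τ+R)/(τ+1) - |y|` is positive, `F_R = (b g)^α` with `b = (p-2)/(p-1) = α⁻¹`. Since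
`α b = 1`, the chain rule carries no constant: `∂_y F = -sign y · w` and `∂_τ F = w ∂_τ g`, where
`w = (b g)^(α-1)`. As `(α-1)(p-1) = α`, both `|∂_y F|^(p-1)` and the flux `|∂_y F|^(p-2) ∂_y F`
are `±F`, so `Δ_p F = w`, and `α F = g w`. After the `F` and `|y|` terms cancel, the equation
reduces to `w (A' - (1 - A)/(1+τ)) = 0` for `A = (τ+R)/(τ+1)`, and indeed `A' = (1 - A)/(τ+1)`.
-/

open Real Filter Topology

theorem abs_sign_of_ne_zero {z : ℝ} (hz : z ≠ 0) : |(SignType.sign z : ℝ)| = 1 := by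
  rcases hz.lt_or_gt with h | h <;> simp [sign_pos, h]

theorem eventually_sign_eq {y : ℝ} (hy : y ≠ 0) :
    ∀ᶠ z in 𝓝 y, SignType.sign z = SignType.sign y := by
  simpa [ContinuousAt, nhds_discrete] using continuousAt_sign_of_ne_zero hy

section PowerProfile

variable {α b p : ℝ}

theorem HasDerivAt.mul_rpow_of_mul_eq_one {g : ℝ → ℝ} {g' x : ℝ} (hg : HasDerivAt g g' x)
    (hgx : 0 < b * g x) (hαb : α * b = 1) :
    HasDerivAt (fun t => (b * g t) ^ α) ((b * g x) ^ (α - 1) * g') x := by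
  convert (hg.const_mul b).rpow_const (p := α) (Or.inl hgx.ne') using 1
  linear_combination (-(g' * (b * g x) ^ (α - 1))) * hαb

theorem mul_rpow_eq_mul_rpow_sub_one {g : ℝ} (hb : 0 < b) (hg : 0 < g) (hαb : α * b = 1) :
    α * (b * g) ^ α = g * (b * g) ^ (α - 1) := by
  rw [rpow_sub_one (by positivity)]
  field_simp
  exact hαb

theorem hasDerivAt_rpow_mul_sub_abs (hb : 0 < b) (hαb : α * b = 1) {a z : ℝ} (hz : z ≠ 0)
    (hza : |z| < a) :
    HasDerivAt (fun z => (b * (a - |z|)) ^ α)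
      (-(SignType.sign z : ℝ) * (b * (a - |z|)) ^ (α - 1)) z := by
  have := ((hasDerivAt_abs hz).const_sub a).mul_rpow_of_mul_eq_one
    (mul_pos hb (sub_pos.2 hza)) hαb
  convert this using 1
  ring

theorem deriv_rpow_mul_sub_abs (hb : 0 < b) (hαb : α * b = 1) {a z : ℝ} (hz : z ≠ 0)
    (hza : |z| < a) :
    deriv (fun z => (b * (a - |z|)) ^ α) z
      = -(SignType.sign z : ℝ) * (b * (a - |z|)) ^ (α - 1) :=
  (hasDerivAt_rpow_mul_sub_abs hb hαb hz hza).deriv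

theorem abs_deriv_rpow_mul_sub_abs_rpow (hb : 0 < b) (hαb : α * b = 1)
    (hexp : (α - 1) * (p - 1) = α) {a z : ℝ} (hz : z ≠ 0) (hza : |z| < a) :
    |deriv (fun z => (b * (a - |z|)) ^ α) z| ^ (p - 1) = (b * (a - |z|)) ^ α := by
  have hu : 0 < b * (a - |z|) := mul_pos hb (sub_pos.2 hza)
  rw [deriv_rpow_mul_sub_abs hb hαb hz hza, abs_mul, abs_neg, abs_sign_of_ne_zero hz, one_mul,
    abs_of_pos (rpow_pos_of_pos hu _), ← rpow_mul hu.le, hexp]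

theorem pLaplacianFlux_rpow_mul_sub_abs (hb : 0 < b) (hαb : α * b = 1)
    (hexp : (α - 1) * (p - 1) = α) {a z : ℝ} (hz : z ≠ 0) (hza : |z| < a) :
    |deriv (fun z => (b * (a - |z|)) ^ α) z| ^ (p - 2) * deriv (fun z => (b * (a - |z|)) ^ α) z
      = -(SignType.sign z : ℝ) * (b * (a - |z|)) ^ α := by
  rw [← abs_deriv_rpow_mul_sub_abs_rpow hb hαb hexp hz hza, deriv_rpow_mul_sub_abs hb hαb hz hza,
    abs_mul, abs_neg, abs_sign_of_ne_zero hz, one_mul,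
    abs_of_pos (rpow_pos_of_pos (mul_pos hb (sub_pos.2 hza)) _)]
  set w := (b * (a - |z|)) ^ (α - 1)
  have hw : w ≠ 0 := (rpow_pos_of_pos (mul_pos hb (sub_pos.2 hza)) _).ne'
  rw [show p - 1 = p - 2 + 1 by ring, rpow_add_one hw]
  ring

theorem deriv_pLaplacianFlux_rpow_mul_sub_abs (hb : 0 < b) (hαb : α * b = 1)
    (hexp : (α - 1) * (p - 1) = α) {a y : ℝ} (hy : y ≠ 0) (hya : |y| < a) :
    deriv (fun z => |deriv (fun z => (b * (a - |z|)) ^ α) z| ^ (p - 2)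
        * deriv (fun z => (b * (a - |z|)) ^ α) z) y = (b * (a - |y|)) ^ (α - 1) := by
  have hflux : (fun z => |deriv (fun z => (b * (a - |z|)) ^ α) z| ^ (p - 2)
        * deriv (fun z => (b * (a - |z|)) ^ α) z)
      =ᶠ[𝓝 y] fun z => -(SignType.sign y : ℝ) * (b * (a - |z|)) ^ α := by
    filter_upwards [eventually_ne_nhds hy, (continuous_abs.tendsto y).eventually
      (eventually_lt_nhds hya), eventually_sign_eq hy] with z hz hza hsign
    rw [pLaplacianFlux_rpow_mul_sub_abs hb hαb hexp hz hza, hsign]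
  rw [hflux.deriv_eq, ((hasDerivAt_rpow_mul_sub_abs hb hαb hy hya).const_mul _).deriv,
    ← mul_assoc, neg_mul_neg, ← abs_mul_self, abs_mul, abs_sign_of_ne_zero hy, one_mul, one_mul]

end PowerProfile

theorem hasDerivAt_add_div_add_one (R : ℝ) {τ : ℝ} (hτ : τ + 1 ≠ 0) :
    HasDerivAt (fun t => (t + R) / (t + 1)) ((1 - (τ + R) / (τ + 1)) / (τ + 1)) τ := by
  refine (((hasDerivAt_id' τ).add_const R).div ((hasDerivAt_id' τ).add_const 1) hτ).congr_deriv ?_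
  field_simp

theorem stmt8_general (p R : ℝ) (hp : 2 < p)
    (F : ℝ → ℝ → ℝ)
    (hF : ∀ τ y, F τ y = ((p - 2) / (p - 1)) ^ ((p - 1) / (p - 2)) *
      (max ((τ + R) / (τ + 1) - |y|) 0) ^ ((p - 1) / (p - 2)))
    (τ y : ℝ) (hy : y ≠ 0) (hpos : 0 < (τ + R) / (τ + 1) - |y|) :
    deriv (fun t => F t y) τ
      - (1 / (1 + τ)) * (deriv (fun s => |deriv (F τ) s| ^ (p - 2) * deriv (F τ) s) y
          + y * deriv (F τ) y - ((p - 1) / (p - 2)) * F τ y)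
      + |deriv (F τ) y| ^ (p - 1) - F τ y = 0 := by
  set α := (p - 1) / (p - 2)
  set b := (p - 2) / (p - 1)
  set A := (τ + R) / (τ + 1)
  have hp1 : 0 < p - 1 := by linarith
  have hp2 : 0 < p - 2 := by linarith
  have hb : 0 < b := div_pos hp2 hp1
  have hαb : α * b = 1 := by simp only [α, b]; field_simp [hp1.ne', hp2.ne']
  have hexp : (α - 1) * (p - 1) = α := by simp only [α]; field_simp [hp2.ne']; ring
  have hya : |y| < A := sub_pos.1 hpos
  have hτ : τ + 1 ≠ 0 := fun h => by simp only [A, h, div_zero] at hya; linarith [abs_nonneg y]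
  have hFeq (t z : ℝ) (hz : |z| < (t + R) / (t + 1)) :
      F t z = (b * ((t + R) / (t + 1) - |z|)) ^ α := by
    rw [hF, max_eq_left (sub_pos.2 hz).le, ← mul_rpow hb.le (sub_pos.2 hz).le]
  have hFy : F τ =ᶠ[𝓝 y] fun z => (b * (A - |z|)) ^ α := by
    filter_upwards [(continuous_abs.tendsto y).eventually (eventually_lt_nhds hya)] with z hz
    exact hFeq τ z hz
  have hA := hasDerivAt_add_div_add_one R hτ
  have hFτ : (fun t => F t y) =ᶠ[𝓝 τ] fun t => (b * ((t + R) / (t + 1) - |y|)) ^ α := by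
    filter_upwards [hA.continuousAt.eventually (eventually_gt_nhds hya)] with t ht
    exact hFeq t y ht
  have hflux := (hFy.deriv.fun_comp fun d => |d| ^ (p - 2) * d).deriv_eq
  simp only [Function.comp_def] at hflux
  rw [hFτ.deriv_eq, ((hA.sub_const |y|).mul_rpow_of_mul_eq_one (mul_pos hb hpos) hαb).deriv,
    hflux, hFy.deriv.eq_of_nhds, hFeq τ y hya, abs_deriv_rpow_mul_sub_abs_rpow hb hαb hexp hy hya,
    deriv_pLaplacianFlux_rpow_mul_sub_abs hb hαb hexp hy hya, deriv_rpow_mul_sub_abs hb hαb hy hya,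
    mul_rpow_eq_mul_rpow_sub_one hb hpos hαb]
  linear_combination ((b * (A - |y|)) ^ (α - 1) / (1 + τ)) * self_mul_sign y

/-- For `p > 2`, `R > 0`, and `F_R(τ,y) = ((p-2)/(p-1))^((p-1)/(p-2)) ((τ+R)/(τ+1) - |y|)₊^((p-1)/(p-2))`
in dimension `N = 1`: at every point `(τ,y)` with `τ > 0`, `y ≠ 0` and
`(τ+R)/(τ+1) - |y| > 0`, `F_R` satisfies
`∂_τ F - (1/(1+τ))(Δ_p F + y ∂_y F - ((p-1)/(p-2)) F) + |∂_y F|^(p-1) - F = 0`,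
where `Δ_p F = ∂_y(|∂_y F|^(p-2) ∂_y F)`. -/
theorem stmt8 (p R : ℝ) (hp : 2 < p) (hR : 0 < R)
    (F : ℝ → ℝ → ℝ)
    (hF : ∀ τ y, F τ y = ((p - 2) / (p - 1)) ^ ((p - 1) / (p - 2)) *
      (max ((τ + R) / (τ + 1) - |y|) 0) ^ ((p - 1) / (p - 2)))
    (τ y : ℝ) (hτ : 0 < τ) (hy : y ≠ 0) (hpos : 0 < (τ + R) / (τ + 1) - |y|) :
    deriv (fun t => F t y) τ
      - (1 / (1 + τ)) * (deriv (fun s => |deriv (F τ) s| ^ (p - 2) * deriv (F τ) s) y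
          + y * deriv (F τ) y - ((p - 1) / (p - 2)) * F τ y)
      + |deriv (F τ) y| ^ (p - 1) - F τ y = 0 :=
  stmt8_general p R hp F hF τ y hy hpos
end
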